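/- Let α, β, γ ∈ ℝ with γ ≠ 0. Then (𝔤₂, g, J) is a first kind algebraic Wanas soliton associated to the canonical connection ∇⁰ if and only if α = β = 0 and the soliton constant satisfies 2γ² + c = 0; in that case the derivation D satisfies De₁ = 0, De₂ = γ²e₂, De₃ = 2γ²e₃. -/

import Mathlib

noncomputable section

/-- The underlying vector space `ℝ³`. -/
abbrev V : Type := Fin 3 → ℝ

/-- The basis vector `e₁`. -/
def e1 : V := ![1, 0, 0]

/-- The basis vector `e₂`. -/
def e2 : V := ![0, 1, 0]

/-- The basis vector `e₃`. -/
def e3 : V := ![0, 0, 1]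

/-- The Lorentzian metric `g` with `g(e₁,e₁) = g(e₂,e₂) = 1`, `g(e₃,e₃) = -1`. -/
def g (x y : V) : ℝ := x 0 * y 0 + x 1 * y 1 - x 2 * y 2

/-- The Lie bracket. -/
def br (α β γ : ℝ) (x y : V) : V :=
  (x 0 * y 1 - x 1 * y 0) • (γ • e2 - β • e3) + (x 0 * y 2 - x 2 * y 0) • (-(β • e2) - γ • e3) +
    (x 1 * y 2 - x 2 * y 1) • (α • e1)

/-- The canonical connection `∇⁰`. -/
def nab (α β γ : ℝ) (x y : V) : V :=
  (x 1 * y 0) • (-(γ • e2)) + (x 1 * y 1) • (γ • e1) + (x 2 * y 0) • ((α / 2) • e2) +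
    (x 2 * y 1) • (-((α / 2) • e1))

/-- The torsion `T⁰(X,Y) = ∇⁰_X Y - ∇⁰_Y X - [X,Y]`. -/
def T (α β γ : ℝ) (x y : V) : V := nab α β γ x y - nab α β γ y x - br α β γ x y

/-- The tensor `A⁰(X,Y)Z = T⁰(T⁰(X,Y),Z)`. -/
def A (α β γ : ℝ) (x y z : V) : V := T α β γ (T α β γ x y) z

/-- The curvature `R⁰(X,Y)Z = ∇⁰_X ∇⁰_Y Z - ∇⁰_Y ∇⁰_X Z - ∇⁰_{[X,Y]} Z`. -/
def Rc (α β γ : ℝ) (x y z : V) : V :=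
  nab α β γ x (nab α β γ y z) - nab α β γ y (nab α β γ x z) - nab α β γ (br α β γ x y) z

/-- The Wanas tensor `W⁰(X,Y)Z = R⁰(X,Y)Z - A⁰(X,Y)Z`. -/
def W (α β γ : ℝ) (x y z : V) : V := Rc α β γ x y z - A α β γ x y z

/-- `w⁰(X,Y) = -g(W⁰(X,e₁)Y,e₁) - g(W⁰(X,e₂)Y,e₂) + g(W⁰(X,e₃)Y,e₃)`. -/
def w (α β γ : ℝ) (x y : V) : ℝ :=
  -g (W α β γ x e1 y) e1 - g (W α β γ x e2 y) e2 + g (W α β γ x e3 y) e3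

/-- `w̃⁰(X,Y) = (w⁰(X,Y) + w⁰(Y,X))/2`. -/
def wt (α β γ : ℝ) (x y : V) : ℝ := (w α β γ x y + w α β γ y x) / 2

/-- `D` is a derivation of the Lie algebra. -/
def IsDeriv (α β γ : ℝ) (D : V →ₗ[ℝ] V) : Prop :=
  ∀ x y, D (br α β γ x y) = br α β γ (D x) y + br α β γ x (D y)


/-! Because `g` is nondegenerate, `Wan⁰` is the explicit operator `wanasMap`, so a soliton forces
`D = wanasMap - c • id`. The derivation identity on the pairs `(e₁, e₂)` and `(e₂, e₃)` then yields
three polynomial equations: the first fixes `c` (as `γ ≠ 0`), the second forces `α = 0` by a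
sum-of-squares argument, and the third `β = 0`. Conversely, for `α = β = 0` every map that kills
`e₁` and scales `e₂`, `e₃` is a derivation. -/

def wanasMap (α β γ : ℝ) (x : V) : V :=
  ![(α * β / 2 - 2 * β ^ 2 - 2 * γ ^ 2) * x 0,
    (-γ ^ 2 - 3 * α * β / 2) * x 1 + (β * γ - α * γ) * x 2,
    α * γ / 2 * x 1 + (α ^ 2 / 2 - α * β) * x 2]

theorem w_eq_g_wanasMap (α β γ : ℝ) (x y : V) : w α β γ x y = g (wanasMap α β γ x) y := by
  simp only [w, W, Rc, A, T, nab, br, g, wanasMap, e1, e2, e3]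
  simp
  ring

theorem eq_of_forall_g_eq {u v : V} (h : ∀ y, g u y = g v y) : u = v := by
  funext i
  fin_cases i
  · simpa [g, e1] using h e1
  · simpa [g, e2] using h e2
  · simpa [g, e3] using h e3

theorem eq_wanasMap {α β γ : ℝ} {Wan : V → V} (hWan : ∀ x y, w α β γ x y = g (Wan x) y) (x : V) :
    Wan x = wanasMap α β γ x :=
  eq_of_forall_g_eq fun y => by rw [← hWan, w_eq_g_wanasMap]

theorem eq_coord_smul_basis (x : V) : x = x 0 • e1 + x 1 • e2 + x 2 • e3 := by
  funext i
  fin_cases i <;> simp [e1, e2, e3]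

theorem LinearMap.apply_eq_of_eigenbasis {a b d : ℝ} (f : V →ₗ[ℝ] V) (h₁ : f e1 = a • e1)
    (h₂ : f e2 = b • e2) (h₃ : f e3 = d • e3) (x : V) : f x = ![a * x 0, b * x 1, d * x 2] := by
  conv_lhs => rw [eq_coord_smul_basis x]
  simp only [map_add, map_smul, h₁, h₂, h₃]
  funext i
  fin_cases i <;> simp [e1, e2, e3] <;> ring

theorem IsDeriv.soliton_equations {α β γ c : ℝ} {D : V →ₗ[ℝ] V} (hDer : IsDeriv α β γ D)
    (hD : ∀ x, D x = wanasMap α β γ x - c • x) :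
    γ * (c + α * β + β ^ 2 + 2 * γ ^ 2) = 0 ∧
      α * (c - γ ^ 2 - 2 * β ^ 2 + 3 * α * β - α ^ 2 / 2) = 0 ∧
      β * (c + 3 * γ ^ 2 + 2 * β ^ 2) = α * (γ ^ 2 - α * β / 2) := by
  have h₁ := congrFun (hDer e1 e2) 1
  have h₂ := congrFun (hDer e2 e3) 0
  have h₃ := congrFun (hDer e1 e2) 2
  simp only [hD, br, wanasMap, e1, e2, e3] at h₁ h₂ h₃
  simp at h₁ h₂ h₃
  exact ⟨by linear_combination h₁, by linear_combination h₂, by linear_combination -h₃⟩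

theorem soliton_parameters {α β γ c : ℝ} (hγ : γ ≠ 0)
    (h₁ : γ * (c + α * β + β ^ 2 + 2 * γ ^ 2) = 0)
    (h₂ : α * (c - γ ^ 2 - 2 * β ^ 2 + 3 * α * β - α ^ 2 / 2) = 0)
    (h₃ : β * (c + 3 * γ ^ 2 + 2 * β ^ 2) = α * (γ ^ 2 - α * β / 2)) :
    α = 0 ∧ β = 0 ∧ 2 * γ ^ 2 + c = 0 := by
  have hγ2 : 0 < γ ^ 2 := by positivity
  have hc : c = -(α * β) - β ^ 2 - 2 * γ ^ 2 := by
    linear_combination (mul_eq_zero.mp h₁).resolve_left hγ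
  subst hc
  -- after eliminating `c`, the second factor of `h₂` is `-((α - 2β)²/2 + β² + 3γ²)`
  have hα : α = 0 := by
    refine (mul_eq_zero.mp h₂).resolve_right fun h => ?_
    nlinarith [sq_nonneg (α - 2 * β), sq_nonneg β]
  subst hα
  have hβ : β = 0 := by
    refine (mul_eq_zero.mp (show β * (β ^ 2 + γ ^ 2) = 0 by linear_combination h₃)).resolve_right ?_
    positivity
  subst hβ
  exact ⟨rfl, rfl, by ring⟩

theorem isDeriv_of_eigenbasis (γ a b : ℝ) (D : V →ₗ[ℝ] V) (h₁ : D e1 = 0) (h₂ : D e2 = a • e2)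
    (h₃ : D e3 = b • e3) : IsDeriv 0 0 γ D := by
  have hD := D.apply_eq_of_eigenbasis (a := 0) (by rw [h₁, zero_smul]) h₂ h₃
  intro x y
  simp only [hD]
  funext i
  fin_cases i <;> simp [br, e1, e2, e3] <;> ring

theorem g2_first_kind_algebraic_Wanas_soliton (α β γ : ℝ) (hγ : γ ≠ 0)
    (Wan : V →ₗ[ℝ] V) (hWan : ∀ x y, w α β γ x y = g (Wan x) y)
    (c : ℝ) (D : V →ₗ[ℝ] V) :
    (IsDeriv α β γ D ∧ ∀ x, Wan x = c • x + D x) ↔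
      α = 0 ∧ β = 0 ∧ 2 * γ ^ 2 + c = 0 ∧
        D e1 = 0 ∧ D e2 = γ ^ 2 • e2 ∧ D e3 = (2 * γ ^ 2) • e3 := by
  have hWan' := eq_wanasMap hWan
  constructor
  · rintro ⟨hDer, hsol⟩
    have hD : ∀ x, D x = wanasMap α β γ x - c • x := fun x => by
      rw [← hWan', hsol, add_sub_cancel_left]
    obtain ⟨h₁, h₂, h₃⟩ := hDer.soliton_equations hD
    obtain ⟨rfl, rfl, hc⟩ := soliton_parameters hγ h₁ h₂ h₃
    refine ⟨rfl, rfl, hc, ?_, ?_, ?_⟩ <;> rw [hD] <;> funext i <;> fin_cases i <;>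
      simp [wanasMap, e1, e2, e3] <;> linarith
  · rintro ⟨rfl, rfl, hc, h₁, h₂, h₃⟩
    refine ⟨isDeriv_of_eigenbasis γ _ _ D h₁ h₂ h₃, fun x => ?_⟩
    obtain rfl : c = -(2 * γ ^ 2) := by linarith
    rw [hWan', D.apply_eq_of_eigenbasis (a := 0) (by rw [h₁, zero_smul]) h₂ h₃]
    funext i
    fin_cases i <;> simp [wanasMap]
    ring
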